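/- Let f be a monic polynomial of degree d ≥ 2 whose filled Julia set K(f) is connected, and let φ be its Böttcher coordinate. Let t ∈ ℝ and suppose the external ray R_f(t) lands at a point z₀ ∈ K(f) which is not a critical value of f, so that f⁻¹(z₀) consists of d distinct points. Then each point of f⁻¹(z₀) is the landing point of precisely one of the external rays R_f((t + k)/d) for k ∈ {0, 1, …, d−1}. -/

import Mathlib

open Complex Metric Set Filter Polynomial

noncomputable section

/-- `x` is a computable real number. -/
def ComputableReal (x : ℝ) : Prop :=
  ∃ g : ℕ → ℚ, Computable g ∧ ∀ n : ℕ, |(g n : ℝ) - x| < (1 / 2) ^ n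

/-- `z` is a computable complex number. -/
def ComputableComplex (z : ℂ) : Prop :=
  ComputableReal z.re ∧ ComputableReal z.im

/-- The point of `ℂ` with rational coordinates `q`. -/
def ratPoint (q : ℚ × ℚ) : ℂ := ⟨(q.1 : ℝ), (q.2 : ℝ)⟩

/-- The rational ball coded by the triple `c` (center coordinates, radius). -/
def ratBall (c : ℚ × ℚ × ℚ) : Set ℂ := Metric.ball (ratPoint (c.1, c.2.1)) (c.2.2 : ℝ)

/-- A computable enumeration of (codes of) rational balls. -/
def ballEnum (n : ℕ) : ℚ × ℚ × ℚ := Denumerable.ofNat (ℚ × ℚ × ℚ) n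

/-- `U` is a lower computable (recursively enumerable) open subset of `ℂ`:
it is a union of a computable sequence of rational balls. -/
def LowerComputableOpen (U : Set ℂ) : Prop :=
  ∃ g : ℕ → ℚ × ℚ × ℚ, Computable g ∧ U = ⋃ n, ratBall (g n)

/-- `K` is a computable (compact) subset of `ℂ`: there is a computable assignment of a
finite list of rational points to each `n`, within Hausdorff distance `2⁻ⁿ` of `K`. -/
def ComputableCompactSet (K : Set ℂ) : Prop :=
  ∃ C : ℕ → List (ℚ × ℚ), Computable C ∧
    ∀ n : ℕ, (C n = [] ↔ K = ∅) ∧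
      Metric.hausdorffDist (ratPoint '' {q | q ∈ C n}) K < (1 / 2) ^ n

/-- `x` is a uniformly computable sequence of complex numbers. -/
def UniformlyComputableSeq (x : ℕ → ℂ) : Prop :=
  ∃ h : ℕ × ℕ → ℚ × ℚ, Computable h ∧
    ∀ n m : ℕ, dist (ratPoint (h (n, m))) (x n) ≤ (1 / 2) ^ m

/-- A compact set `K` is lower computable if some uniformly computable sequence of
points of `K` is dense in `K`. -/
def LowerComputableCompact (K : Set ℂ) : Prop :=
  ∃ x : ℕ → ℂ, (∀ n, x n ∈ K) ∧ UniformlyComputableSeq x ∧ K ⊆ closure (Set.range x)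

/-- `f` is computable on `S`: preimages of rational balls are, relative to `S`,
uniformly lower computable open sets. -/
def ComputableOn (f : ℂ → ℂ) (S : Set ℂ) : Prop :=
  ∃ e : ℕ × ℕ → ℚ × ℚ × ℚ, Computable e ∧
    ∀ n : ℕ, f ⁻¹' ratBall (ballEnum n) ∩ S = (⋃ k, ratBall (e (n, k))) ∩ S

/-- The filled Julia set of `f`: points with bounded forward orbit. -/
def filledJulia (f : ℂ → ℂ) : Set ℂ :=
  {z : ℂ | Bornology.IsBounded (Set.range fun n : ℕ => f^[n] z)}

/-- The Julia set of `f`: the boundary of the filled Julia set. -/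
def juliaSet (f : ℂ → ℂ) : Set ℂ := frontier (filledJulia f)

/-- The external ray of angle `t` (traced by `r ↦ φ (r e^{2πit})`, `r > 1`) lands at `w`. -/
def Lands (φ : ℂ → ℂ) (t : ℝ) (w : ℂ) : Prop :=
  Filter.Tendsto (fun r : ℝ => φ ((r : ℂ) * Complex.exp (2 * Real.pi * Complex.I * (t : ℂ))))
    (nhdsWithin 1 (Set.Ioi 1)) (nhds w)

/-!
The conjugacy `φ (z ^ d) = f (φ z)` maps each ray `R((t + k)/d)` onto `R(t)`, so `f` tends to `z₀`
along it. Since `f` is a closed map with finite fibre `f⁻¹(z₀)`, the ray accumulates only on that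
fibre, and as a connected curve it then converges to one of its points. Two rays `R((t + k)/d)`,
`R((t + k')/d)` have the same image under `f`; if they landed at the same preimage `w`, local
injectivity of `f` at `w` (where `f' w ≠ 0`) would make them meet, contradicting injectivity of
`φ` unless `k = k'`. So the `d` landing points are distinct and exhaust the `d` preimages.
-/

open scoped Topology Real

section ClusterSet

variable {X : Type*} [TopologicalSpace X] {a : ℝ} {δ : ℝ → X}

theorem ContinuousOn.exists_eventually_mem_of_pairwiseDisjoint (hδ : ContinuousOn δ (Ioi a))
    {P : Set X} {U : X → Set X} (hU : ∀ x ∈ P, IsOpen (U x)) (hdisj : P.PairwiseDisjoint U)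
    (h : ∀ᶠ r in 𝓝[>] a, δ r ∈ ⋃ x ∈ P, U x) : ∃ w ∈ P, ∀ᶠ r in 𝓝[>] a, δ r ∈ U w := by
  obtain ⟨u, hau : a < u, hu⟩ := mem_nhdsGT_iff_exists_Ioo_subset.1 h
  obtain ⟨r₀, hr₀⟩ := nonempty_Ioo.2 hau
  obtain ⟨w, hw, hr₀w⟩ := mem_iUnion₂.1 (hu hr₀)
  refine ⟨w, hw, mem_of_superset (Ioo_mem_nhdsGT hau) fun r hr => ?_⟩
  have hcover : δ '' Ioo a u ⊆ U w ∪ ⋃ x ∈ P \ {w}, U x := by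
    rintro _ ⟨r, hr, rfl⟩
    obtain ⟨x, hx, hrx⟩ := mem_iUnion₂.1 (hu hr)
    by_cases hxw : x = w
    · exact Or.inl (hxw ▸ hrx)
    · exact Or.inr (mem_biUnion ⟨hx, hxw⟩ hrx)
  have hsep : Disjoint (U w) (⋃ x ∈ P \ {w}, U x) :=
    disjoint_iUnion₂_right.2 fun x hx => hdisj hw hx.1 (Ne.symm hx.2)
  exact ((isPreconnected_Ioo.image δ (hδ.mono Ioo_subset_Ioi_self)).subset_left_of_subset_union
    (hU w hw) (isOpen_biUnion fun x hx => hU x hx.1) hsep hcover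
    ⟨δ r₀, mem_image_of_mem δ hr₀, hr₀w⟩) (mem_image_of_mem δ hr)

/-- Pairwise disjoint neighbourhoods of the points of `P` cannot split the connected tail of
the curve. -/
theorem ContinuousOn.exists_tendsto_of_tendsto_nhdsSet [T2Space X] (hδ : ContinuousOn δ (Ioi a))
    {P : Set X} (hP : P.Finite) (h : Tendsto δ (𝓝[>] a) (𝓝ˢ P)) :
    ∃ w ∈ P, Tendsto δ (𝓝[>] a) (𝓝 w) := by
  classical
  obtain ⟨U, hU, hdisj⟩ := hP.t2_separation
  have hcover : ∀ V : X → Set X, (∀ x, x ∈ V x ∧ IsOpen (V x)) → V ≤ U →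
      ∃ w ∈ P, ∀ᶠ r in 𝓝[>] a, δ r ∈ V w := fun V hV hVU =>
    hδ.exists_eventually_mem_of_pairwiseDisjoint (fun x _ => (hV x).2) (hdisj.mono hVU)
      (h <| (isOpen_biUnion fun x _ => (hV x).2).mem_nhdsSet.2
        fun x hx => mem_biUnion hx (hV x).1)
  obtain ⟨w, hw, hUw⟩ := hcover U hU le_rfl
  refine ⟨w, hw, (nhds_basis_opens w).tendsto_right_iff.2 fun N ⟨hwN, hN⟩ => ?_⟩
  set V := Function.update U w (U w ∩ N)
  have hV : ∀ x, x ∈ V x ∧ IsOpen (V x) := by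
    intro x
    rcases eq_or_ne x w with rfl | hne
    · simp only [V, Function.update_self]
      exact ⟨⟨(hU x).1, hwN⟩, (hU x).2.inter hN⟩
    · simpa only [V, Function.update_of_ne hne] using hU x
  have hVU : V ≤ U := by
    intro x
    rcases eq_or_ne x w with rfl | hne
    · simp only [V, Function.update_self, inter_subset_left]
    · simp only [V, Function.update_of_ne hne, le_refl]
  obtain ⟨w', hw', hw'N⟩ := hcover V hV hVU
  obtain rfl : w' = w := by
    by_contra hne
    obtain ⟨r, hrw, hrw'⟩ := (hUw.and hw'N).exists
    exact Set.disjoint_left.1 (hdisj hw' hw hne) (hVU w' hrw') hrw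
  filter_upwards [hw'N] with r hr
  simp only [V, Function.update_self] at hr
  exact hr.2

theorem ContinuousOn.exists_tendsto_of_tendsto_comp [T2Space X] {Y : Type*} [TopologicalSpace Y]
    {g : X → Y} (hg : IsClosedMap g) {y : Y} (hfin : (g ⁻¹' {y}).Finite)
    (hδ : ContinuousOn δ (Ioi a)) (h : Tendsto (g ∘ δ) (𝓝[>] a) (𝓝 y)) :
    ∃ x, g x = y ∧ Tendsto δ (𝓝[>] a) (𝓝 x) :=
  hδ.exists_tendsto_of_tendsto_nhdsSet hfin
    ((tendsto_comap_iff.2 h).mono_right hg.comap_nhds_le)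

end ClusterSet

theorem Polynomial.ncard_preimage_eval_eq_natDegree {K : Type*} [Field K] [IsAlgClosed K]
    (f : K[X]) (z : K) (h : ∀ x, f.derivative.eval x = 0 → f.eval x ≠ z) :
    ((fun x => f.eval x) ⁻¹' {z}).ncard = f.natDegree := by
  classical
  set g := f - C z
  have hg : g ≠ 0 := fun hg => h 0 (by simp [sub_eq_zero.1 hg]) (by simp [sub_eq_zero.1 hg])
  have hroots : (fun x => f.eval x) ⁻¹' {z} = g.roots.toFinset := by
    ext x
    simp [g, hg, sub_eq_zero]
  have hnodup : g.roots.Nodup := by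
    refine Multiset.nodup_iff_count_le_one.2 fun x => ?_
    rw [count_roots, ← not_lt, one_lt_rootMultiplicity_iff_isRoot hg]
    rintro ⟨hx, hx'⟩
    simp only [g, derivative_sub, derivative_C, sub_zero, IsRoot, eval_sub, eval_C,
      sub_eq_zero] at hx hx'
    exact h x hx' hx
  rw [hroots, ncard_coe_finset, Multiset.toFinset_card_of_nodup hnodup,
    ← (IsAlgClosed.splits g).natDegree_eq_card_roots, natDegree_sub_C]

theorem HasStrictDerivAt.eventually_eq_of_tendsto {𝕜 α : Type*} [NontriviallyNormedField 𝕜]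
    [CompleteSpace 𝕜] {g : 𝕜 → 𝕜} {g' w : 𝕜} (hg : HasStrictDerivAt g g' w) (hg' : g' ≠ 0)
    {l : Filter α} {γ₁ γ₂ : α → 𝕜} (h₁ : Tendsto γ₁ l (𝓝 w)) (h₂ : Tendsto γ₂ l (𝓝 w))
    (h : ∀ᶠ r in l, g (γ₁ r) = g (γ₂ r)) : ∀ᶠ r in l, γ₁ r = γ₂ r := by
  have hinv := hg.eventually_left_inverse hg'
  filter_upwards [h₁.eventually hinv, h₂.eventually hinv, h] with r hr₁ hr₂ hr
  rw [← hr₁, ← hr₂, hr]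

theorem Fin.eq_of_add_div_eq_add_div_add_int {d : ℕ} (t : ℝ) {k k' : Fin d} {n : ℤ}
    (h : (t + (k : ℕ)) / d = (t + (k' : ℕ)) / d + n) : k = k' := by
  have hd : (d : ℝ) ≠ 0 := Nat.cast_ne_zero.2 (Fin.pos k).ne'
  have hreal : ((k : ℕ) : ℝ) - (k' : ℕ) = d * n := by
    field_simp at h
    linarith
  have hint : ((k : ℕ) : ℤ) - (k' : ℕ) = d * n := by exact_mod_cast hreal
  have hzero := Int.eq_zero_of_abs_lt_dvd ⟨n, hint⟩ (by rw [abs_lt]; omega)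
  exact Fin.ext (by omega)

def rayPoint (t r : ℝ) : ℂ := r * exp (2 * π * I * t)

theorem continuous_rayPoint (t : ℝ) : Continuous (rayPoint t) := by
  unfold rayPoint
  fun_prop

theorem norm_rayPoint (t : ℝ) {r : ℝ} (hr : 0 ≤ r) : ‖rayPoint t r‖ = r := by
  have harg : 2 * π * I * t = ((2 * π * t : ℝ) : ℂ) * I := by
    push_cast
    ring
  rw [rayPoint, norm_mul, harg, norm_exp_ofReal_mul_I, mul_one, norm_real,
    Real.norm_of_nonneg hr]

theorem one_lt_norm_rayPoint (t : ℝ) {r : ℝ} (hr : 1 < r) : 1 < ‖rayPoint t r‖ := by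
  rwa [norm_rayPoint t (by linarith)]

theorem rayPoint_pow (t r : ℝ) (n : ℕ) : rayPoint t r ^ n = rayPoint (n * t) (r ^ n) := by
  rw [rayPoint, rayPoint, mul_pow, ← exp_nat_mul]
  push_cast
  ring_nf

theorem rayPoint_add_natCast (t r : ℝ) (k : ℕ) : rayPoint (t + k) r = rayPoint t r := by
  rw [rayPoint, rayPoint]
  push_cast
  rw [mul_add, exp_add, mul_comm _ (k : ℂ), ← mul_assoc, exp_nat_mul_two_pi_mul_I, mul_one]

theorem exists_int_of_rayPoint_eq {s s' r : ℝ} (hr : r ≠ 0)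
    (h : rayPoint s r = rayPoint s' r) : ∃ n : ℤ, s = s' + n := by
  obtain ⟨n, hn⟩ := exp_eq_exp_iff_exists_int.1 (mul_left_cancel₀ (ofReal_ne_zero.2 hr) h)
  refine ⟨n, ofReal_injective ?_⟩
  have h2πI : 2 * π * I ≠ 0 := by simp [Real.pi_ne_zero, I_ne_zero]
  push_cast
  apply mul_left_cancel₀ h2πI
  linear_combination hn

theorem tendsto_pow_nhdsGT_one {n : ℕ} (hn : n ≠ 0) :
    Tendsto (fun r : ℝ => r ^ n) (𝓝[>] 1) (𝓝[>] 1) := by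
  have h := ((continuous_pow n).continuousWithinAt (s := Ioi (1 : ℝ)) (x := 1)).tendsto_nhdsWithin
    fun r (hr : 1 < r) => one_lt_pow₀ hr hn
  rwa [one_pow] at h

section BoettcherRays

variable {f : ℂ[X]} {d : ℕ} {φ : ℂ → ℂ}

theorem eval_comp_rayPoint (hconj : ∀ z : ℂ, 1 < ‖z‖ → φ (z ^ d) = f.eval (φ z)) (hd : d ≠ 0)
    (t : ℝ) (k : ℕ) {r : ℝ} (hr : 1 < r) :
    f.eval (φ (rayPoint ((t + k) / d) r)) = φ (rayPoint t (r ^ d)) := by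
  rw [← hconj _ (one_lt_norm_rayPoint _ hr), rayPoint_pow,
    mul_div_cancel₀ _ (Nat.cast_ne_zero.2 hd), rayPoint_add_natCast]

theorem exists_lands_preimage_of_lands (hφ : ContinuousOn φ {z : ℂ | 1 < ‖z‖})
    (hconj : ∀ z : ℂ, 1 < ‖z‖ → φ (z ^ d) = f.eval (φ z)) (hd : d ≠ 0) {t : ℝ} {z₀ : ℂ}
    (hfin : ((fun z => f.eval z) ⁻¹' {z₀}).Finite) (hland : Lands φ t z₀) (k : ℕ) :
    ∃ w, f.eval w = z₀ ∧ Lands φ ((t + k) / d) w := by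
  refine ContinuousOn.exists_tendsto_of_tendsto_comp f.isClosedMap_eval hfin
    (hφ.comp (continuous_rayPoint _).continuousOn fun r hr => one_lt_norm_rayPoint _ hr) ?_
  refine (hland.comp (tendsto_pow_nhdsGT_one hd)).congr' ?_
  filter_upwards [self_mem_nhdsWithin] with r hr
  exact (eval_comp_rayPoint hconj hd t k hr).symm

theorem eq_of_lands_of_lands (hφ : InjOn φ {z : ℂ | 1 < ‖z‖})
    (hconj : ∀ z : ℂ, 1 < ‖z‖ → φ (z ^ d) = f.eval (φ z)) (hd : d ≠ 0) {t : ℝ} {w : ℂ}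
    (hw : f.derivative.eval w ≠ 0) {k k' : Fin d} (hk : Lands φ ((t + (k : ℕ)) / d) w)
    (hk' : Lands φ ((t + (k' : ℕ)) / d) w) : k = k' := by
  have hsame : ∀ᶠ r in 𝓝[>] 1, f.eval (φ (rayPoint ((t + (k : ℕ)) / d) r)) =
      f.eval (φ (rayPoint ((t + (k' : ℕ)) / d) r)) := by
    filter_upwards [self_mem_nhdsWithin] with r hr
    rw [eval_comp_rayPoint hconj hd t _ hr, eval_comp_rayPoint hconj hd t _ hr]
  have hφeq := (f.hasStrictDerivAt w).eventually_eq_of_tendsto hw hk hk' hsame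
  obtain ⟨r, hφr, hr : 1 < r⟩ := (hφeq.and self_mem_nhdsWithin).exists
  obtain ⟨n, hn⟩ := exists_int_of_rayPoint_eq (by linarith)
    (hφ (one_lt_norm_rayPoint _ hr) (one_lt_norm_rayPoint _ hr) hφr)
  exact Fin.eq_of_add_div_eq_add_div_add_int t hn

end BoettcherRays

theorem landing_of_preimage_rays_general (f : Polynomial ℂ)
    (d : ℕ) (hd : d = f.natDegree) (hd2 : 2 ≤ d)
    (φ : ℂ → ℂ)
    (hbij : Set.BijOn φ {z : ℂ | 1 < ‖z‖} (filledJulia (fun z : ℂ => f.eval z))ᶜ)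
    (hholo : DifferentiableOn ℂ φ {z : ℂ | 1 < ‖z‖})
    (hconj : ∀ z : ℂ, 1 < ‖z‖ → φ (z ^ d) = f.eval (φ z))
    (t : ℝ) (z₀ : ℂ)
    (hnotcv : ∀ z : ℂ, (Polynomial.derivative f).eval z = 0 → f.eval z ≠ z₀)
    (hland : Lands φ t z₀) :
    ((fun z : ℂ => f.eval z) ⁻¹' {z₀}).ncard = d ∧
    ∀ w : ℂ, f.eval w = z₀ → ∃! k : Fin d, Lands φ ((t + (k : ℕ)) / d) w := by
  have hd0 : d ≠ 0 := by omega
  have hcard : ((fun z : ℂ => f.eval z) ⁻¹' {z₀}).ncard = d :=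
    hd ▸ f.ncard_preimage_eval_eq_natDegree z₀ hnotcv
  have hfin := Set.finite_of_ncard_ne_zero (hcard ▸ hd0)
  choose L hLz₀ hL using exists_lands_preimage_of_lands hholo.continuousOn hconj hd0 hfin hland
  have hLinj : Function.Injective fun k : Fin d => L k := fun k k' (hkk' : L k = L k') =>
    eq_of_lands_of_lands hbij.injOn hconj hd0 (fun h => hnotcv _ h (hLz₀ k)) (hL k)
      (hkk' ▸ hL k')
  have hrange : range (fun k : Fin d => L k) = (fun z : ℂ => f.eval z) ⁻¹' {z₀} :=
    eq_of_subset_of_ncard_le (range_subset_iff.2 fun k => hLz₀ k)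
      (by rw [hcard, ncard_range_of_injective hLinj, Nat.card_fin]) hfin
  refine ⟨hcard, fun w hw => ?_⟩
  obtain ⟨k, rfl⟩ : w ∈ range (fun k : Fin d => L k) := hrange ▸ hw
  exact ⟨k, hL k, fun k' hk' => hLinj (tendsto_nhds_unique (hL k') hk')⟩

/-- Let `f` be a monic polynomial of degree `d ≥ 2` with connected filled
Julia set and Böttcher coordinate `φ`.  If the external ray `R_f(t)` lands at a point
`z₀ ∈ K(f)` which is not a critical value of `f`, then `f⁻¹(z₀)` consists of `d` distinct
points and each of them is the landing point of precisely one of the external rays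
`R_f((t + k)/d)`, `k ∈ {0, 1, …, d−1}`. -/
theorem landing_of_preimage_rays (f : Polynomial ℂ) (hmonic : f.Monic)
    (d : ℕ) (hd : d = f.natDegree) (hd2 : 2 ≤ d)
    (hconn : IsConnected (filledJulia (fun z : ℂ => f.eval z)))
    (φ : ℂ → ℂ)
    (hbij : Set.BijOn φ {z : ℂ | 1 < ‖z‖} (filledJulia (fun z : ℂ => f.eval z))ᶜ)
    (hholo : DifferentiableOn ℂ φ {z : ℂ | 1 < ‖z‖})
    (hnorm : Filter.Tendsto (fun z : ℂ => φ z / z) (Bornology.cobounded ℂ) (nhds 1))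
    (hconj : ∀ z : ℂ, 1 < ‖z‖ → φ (z ^ d) = f.eval (φ z))
    (t : ℝ) (z₀ : ℂ) (hz₀ : z₀ ∈ filledJulia (fun z : ℂ => f.eval z))
    (hnotcv : ∀ z : ℂ, (Polynomial.derivative f).eval z = 0 → f.eval z ≠ z₀)
    (hland : Lands φ t z₀) :
    ((fun z : ℂ => f.eval z) ⁻¹' {z₀}).ncard = d ∧
    ∀ w : ℂ, f.eval w = z₀ → ∃! k : Fin d, Lands φ ((t + (k : ℕ)) / d) w :=
  landing_of_preimage_rays_general f d hd hd2 φ hbij hholo hconj t z₀ hnotcv hland
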